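/- arXiv:math/9809082 — 8 statements merged into one kernel-verified Lean document; each statement's English description precedes it below -/
import Mathlib

section
/- The left center of the right-symmetric Witt algebra W_n^+ over a field of characteristic 0 consists exactly of the constant vector fields: a vector field a ∈ W_n^+ satisfies a ∘ b = 0 for all b ∈ W_n^+ if and only if every component polynomial a_i is a constant (i.e. lies in the image of K under the constant embedding). -/
/-! Testing `a` against the unit fields `∂_j` shows that `a` lies in the left center exactly
when every partial derivative of every component vanishes. In characteristic zero,
`∂_i p = 0` kills every coefficient of `p` at a monomial containing `x_i`, because
`coeff (m + e_i) p * (m_i + 1) = coeff m (∂_i p)` and `m_i + 1 ≠ 0`; so a polynomial all of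
whose partial derivatives vanish is constant. -/

/-- The multiplication of the right-symmetric Witt algebra `W_n^+`:
`(a ∘ b)_i = ∑ j, b_j * ∂_j (a_i)`. -/
noncomputable def wmul {K : Type*} [CommSemiring K] {n : ℕ}
    (a b : Fin n → MvPolynomial (Fin n) K) : Fin n → MvPolynomial (Fin n) K :=
  fun i => ∑ j, b j * MvPolynomial.pderiv j (a i)

namespace MvPolynomial

variable {R σ : Type*} [CommSemiring R] [CharZero R] [NoZeroDivisors R]

theorem coeff_eq_zero_of_pderiv_eq_zero {p : MvPolynomial σ R} {i : σ} (hp : pderiv i p = 0)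
    {m : σ →₀ ℕ} (hm : m i ≠ 0) : coeff m p = 0 := by
  have hsplit : m - Finsupp.single i 1 + Finsupp.single i 1 = m :=
    tsub_add_cancel_of_le (Finsupp.single_le_iff.mpr (Nat.one_le_iff_ne_zero.mpr hm))
  have hcoeff := coeff_pderiv (i := i) p (m - Finsupp.single i 1)
  rw [hp, coeff_zero, hsplit] at hcoeff
  exact (mul_eq_zero.mp hcoeff.symm).resolve_right (Nat.cast_add_one_ne_zero _)

theorem forall_pderiv_eq_zero_iff_mem_range_C {p : MvPolynomial σ R} :
    (∀ i, pderiv i p = 0) ↔ p ∈ Set.range (C : R → MvPolynomial σ R) := by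
  classical
  constructor
  · intro hp
    refine ⟨coeff 0 p, ?_⟩
    ext m
    rw [coeff_C]
    split_ifs with hm
    · rw [hm]
    · obtain ⟨i, hi⟩ := Finsupp.ne_iff.mp (Ne.symm hm)
      exact (coeff_eq_zero_of_pderiv_eq_zero (hp i) hi).symm
  · rintro ⟨c, rfl⟩ i
    exact pderiv_C

end MvPolynomial

open MvPolynomial

theorem wmul_pi_single_one {K : Type*} [CommSemiring K] {n : ℕ}
    (a : Fin n → MvPolynomial (Fin n) K) (j : Fin n) :
    wmul a (Pi.single j 1) = fun i => pderiv j (a i) := by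
  funext i
  simp [wmul, Pi.single_apply]

theorem forall_wmul_eq_zero_iff {K : Type*} [CommSemiring K] {n : ℕ}
    (a : Fin n → MvPolynomial (Fin n) K) :
    (∀ b, wmul a b = 0) ↔ ∀ i j, pderiv j (a i) = 0 := by
  constructor
  · intro h i j
    simpa [wmul_pi_single_one] using congrFun (h (Pi.single j 1)) i
  · intro h b
    funext i
    simp [wmul, h i]

theorem wittRsym_left_center_general {K : Type*} [Field K] [CharZero K] {n : ℕ}
    (a : Fin n → MvPolynomial (Fin n) K) :
    (∀ b : Fin n → MvPolynomial (Fin n) K, wmul a b = 0) ↔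
      ∀ i, a i ∈ Set.range (MvPolynomial.C : K → MvPolynomial (Fin n) K) := by
  simp only [forall_wmul_eq_zero_iff, forall_pderiv_eq_zero_iff_mem_range_C]

/-- the left center of `W_n^+` (char 0) consists exactly of the constant
vector fields: `a ∘ b = 0` for all `b` iff every component `a_i` is a constant. -/
theorem wittRsym_left_center {K : Type*} [Field K] [CharZero K] {n : ℕ} (hn : 1 ≤ n)
    (a : Fin n → MvPolynomial (Fin n) K) :
    (∀ b : Fin n → MvPolynomial (Fin n) K, wmul a b = 0) ↔
      ∀ i, a i ∈ Set.range (MvPolynomial.C : K → MvPolynomial (Fin n) K) :=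
  wittRsym_left_center_general a
end

section
/- In a right-symmetric algebra A, for any elements a_1, …, a_{n-1} in the left normalizer N(Z(A)), any a_n ∈ A, and any z in the left center Z(A), the left-normed product satisfies a_1∘(a_2∘(⋯(a_{n-1}∘(a_n∘z))⋯)) = (a_1∘(a_2∘(⋯(a_{n-1}∘a_n)⋯)))∘z. -/
section LeftCenter

variable {K A : Type*} [CommRing K] [AddCommGroup A] [Module K A]

def IsLeftCentral (mul : A →ₗ[K] A →ₗ[K] A) (z : A) : Prop :=
  ∀ b : A, mul z b = 0

def NormalizesLeftCenter (mul : A →ₗ[K] A →ₗ[K] A) (x : A) : Prop :=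
  ∀ z : A, IsLeftCentral mul z → IsLeftCentral mul (mul x z)

/-- Right-symmetry with `c = z` central kills both `z ∘ y` and `(x ∘ z) ∘ y`. -/
theorem mul_mul_leftCentral_eq {mul : A →ₗ[K] A →ₗ[K] A}
    (hrs : ∀ a b c : A, mul a (mul b c) - mul (mul a b) c
      = mul a (mul c b) - mul (mul a c) b)
    {x : A} (hx : NormalizesLeftCenter mul x) (y : A) {z : A} (hz : IsLeftCentral mul z) :
    mul x (mul y z) = mul (mul x y) z := by
  have h := hrs x y z
  rw [hz y, map_zero, hx z hz y, sub_zero] at h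
  exact sub_eq_zero.mp h

end LeftCenter

/-- in a right-symmetric algebra `A`, for any `a_1, …, a_{n-1}` in the left
normalizer `N(Z(A))` (here the list `l`), any `a_n ∈ A` and any `z` in the left center
`Z(A)`, the left-normed product satisfies
`a_1∘(a_2∘(⋯(a_{n-1}∘(a_n∘z))⋯)) = (a_1∘(a_2∘(⋯(a_{n-1}∘a_n)⋯)))∘z`. -/
theorem leftNormed_product_center {K A : Type*} [CommRing K] [AddCommGroup A] [Module K A]
    (mul : A →ₗ[K] A →ₗ[K] A)
    (hrs : ∀ a b c : A, mul a (mul b c) - mul (mul a b) c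
      = mul a (mul c b) - mul (mul a c) b)
    (l : List A)
    (hl : ∀ x ∈ l, ∀ z : A, (∀ b : A, mul z b = 0) → ∀ b : A, mul (mul x z) b = 0)
    (aₙ : A) (z : A) (hz : ∀ b : A, mul z b = 0) :
    l.foldr (fun x y => mul x y) (mul aₙ z) = mul (l.foldr (fun x y => mul x y) aₙ) z := by
  induction l with
  | nil => rfl
  | cons x l ih =>
    rw [List.foldr_cons, List.foldr_cons, ih fun y hy => hl y (List.mem_cons_of_mem x hy)]
    exact mul_mul_leftCentral_eq hrs (hl x List.mem_cons_self) _ hz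
end

section
/- Let A be a right-symmetric algebra over a commutative ring K, let U be a K-module, and let ∪ : A × U → A be a K-bilinear map satisfying a∘(b∪u) = (a∘b)∪u for all a, b ∈ A and u ∈ U. Suppose that every element of A can be written as z∪u for some z in the left center Z(A) and some u ∈ U. Then for any a_1, …, a_{n-1} in the left normalizer N(Z(A)), any a_n ∈ A, and any a ∈ A, the left-normed product satisfies a_1∘(a_2∘(⋯(a_{n-1}∘(a_n∘a))⋯)) = (a_1∘(a_2∘(⋯(a_{n-1}∘a_n)⋯)))∘a. -/
/-!
For `x` in the left normalizer and `z` in the left center, the right-symmetric identity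
for `(x, b, z)` reads `x∘(b∘z) - (x∘b)∘z = x∘(z∘b) - (x∘z)∘b`, whose right side vanishes
because `z` and `x∘z` are left central. So `x` associates with every `b` and `z`; as
`a∘(b∪u) = (a∘b)∪u` and every element is some `z∪u`, `x` associates with all pairs
`b, c`. The left-normed identity then follows by peeling off `a_1, …, a_{n-1}` one at a time.
-/

section RightSymmetric

variable {K A : Type*} [CommSemiring K] [AddCommGroup A] [Module K A]

def leftCenter (mul : A →ₗ[K] A →ₗ[K] A) : Set A := {z | ∀ b, mul z b = 0}

def leftNormalizer (mul : A →ₗ[K] A →ₗ[K] A) : Set A :=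
  {x | ∀ z ∈ leftCenter mul, mul x z ∈ leftCenter mul}

theorem mul_mul_leftCenter {mul : A →ₗ[K] A →ₗ[K] A}
    (hrs : ∀ a b c : A, mul a (mul b c) - mul (mul a b) c
      = mul a (mul c b) - mul (mul a c) b)
    {x z : A} (hx : x ∈ leftNormalizer mul) (hz : z ∈ leftCenter mul) (b : A) :
    mul x (mul b z) = mul (mul x b) z := by
  have h := hrs x b z
  rw [hz b, map_zero, hx z hz b, sub_zero] at h
  exact sub_eq_zero.mp h

theorem mul_mul_of_mem_leftNormalizer {U : Type*} [AddCommGroup U] [Module K U]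
    {mul : A →ₗ[K] A →ₗ[K] A}
    (hrs : ∀ a b c : A, mul a (mul b c) - mul (mul a b) c
      = mul a (mul c b) - mul (mul a c) b)
    {cup : A →ₗ[K] U →ₗ[K] A}
    (hcup : ∀ (a b : A) (u : U), mul a (cup b u) = cup (mul a b) u)
    (hsurj : ∀ c : A, ∃ (z : A) (u : U), z ∈ leftCenter mul ∧ c = cup z u)
    {x : A} (hx : x ∈ leftNormalizer mul) (b c : A) :
    mul x (mul b c) = mul (mul x b) c := by
  obtain ⟨z, u, hz, rfl⟩ := hsurj c
  rw [hcup b z u, hcup x (mul b z) u, hcup (mul x b) z u, mul_mul_leftCenter hrs hx hz b]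

end RightSymmetric

theorem List.foldr_apply_assoc {A : Type*} {f : A → A → A} {l : List A}
    (hl : ∀ x ∈ l, ∀ b c, f x (f b c) = f (f x b) c) (b c : A) :
    l.foldr f (f b c) = f (l.foldr f b) c := by
  induction l with
  | nil => rfl
  | cons x l ih =>
    rw [List.foldr_cons, List.foldr_cons,
      ih fun y hy => hl y (List.mem_cons_of_mem x hy), hl x List.mem_cons_self]

/-- let `A` be a right-symmetric algebra over `K`, `U` a `K`-module and
`∪ : A × U → A` a bilinear pairing with `a∘(b∪u) = (a∘b)∪u`.  If every element of `A`
is of the form `z∪u` with `z` in the left center, then for any `a_1, …, a_{n-1}` in the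
left normalizer `N(Z(A))` (the list `l`), any `a_n ∈ A` and any `a ∈ A`,
`a_1∘(a_2∘(⋯(a_{n-1}∘(a_n∘a))⋯)) = (a_1∘(a_2∘(⋯(a_{n-1}∘a_n)⋯)))∘a`. -/
theorem leftNormed_product_via_cup {K A U : Type*} [CommRing K]
    [AddCommGroup A] [Module K A] [AddCommGroup U] [Module K U]
    (mul : A →ₗ[K] A →ₗ[K] A)
    (hrs : ∀ a b c : A, mul a (mul b c) - mul (mul a b) c
      = mul a (mul c b) - mul (mul a c) b)
    (cup : A →ₗ[K] U →ₗ[K] A)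
    (hcup : ∀ (a b : A) (u : U), mul a (cup b u) = cup (mul a b) u)
    (hsurj : ∀ x : A, ∃ (z : A) (u : U), (∀ b : A, mul z b = 0) ∧ x = cup z u)
    (l : List A)
    (hl : ∀ x ∈ l, ∀ z : A, (∀ b : A, mul z b = 0) → ∀ b : A, mul (mul x z) b = 0)
    (aₙ a : A) :
    l.foldr (fun x y => mul x y) (mul aₙ a) = mul (l.foldr (fun x y => mul x y) aₙ) a :=
  List.foldr_apply_assoc
    (fun x hx => mul_mul_of_mem_leftNormalizer hrs hcup hsurj (hl x hx)) aₙ a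
end

section
/- In a right-symmetric algebra A, the left associative center is closed under multiplication: if X and Y satisfy X∘(b∘c) = (X∘b)∘c and Y∘(b∘c) = (Y∘b)∘c for all b, c ∈ A, then (X∘Y)∘(b∘c) = ((X∘Y)∘b)∘c for all b, c ∈ A. -/
/-- in a right-symmetric algebra `A`, the left associative center is
closed under multiplication: if `X` and `Y` lie in `Z^{l.ass}(A)` then so does `X∘Y`. -/
theorem lass_center_mul_closed {K A : Type*} [CommRing K] [AddCommGroup A] [Module K A]
    (mul : A →ₗ[K] A →ₗ[K] A)
    (hrs : ∀ a b c : A, mul a (mul b c) - mul (mul a b) c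
      = mul a (mul c b) - mul (mul a c) b)
    (X Y : A)
    (hX : ∀ b c : A, mul X (mul b c) = mul (mul X b) c)
    (hY : ∀ b c : A, mul Y (mul b c) = mul (mul Y b) c) :
    ∀ b c : A, mul (mul X Y) (mul b c) = mul (mul (mul X Y) b) c := by
  intro b c
  rw [← hX Y (mul b c), hY b c, hX (mul Y b) c, hX Y b]
end

section
/- Identities for the two Witt multiplications: on the space W_n^+ of polynomial vector fields over a field K of characteristic 0, equipped with the multiplications (a∘b)_i = ∑_j b_j·∂_j(a_i) and (a∗b)_j = (∑_i ∂_i(a_i))·b_j, the following identities hold for all a, b, c: (1) a∘(b∘c) − (a∘b)∘c − a∘(c∘b) + (a∘c)∘b = 0; (2) a∗(b∗c) − b∗(a∗c) = 0; (3) a∘(b∗c) − b∗(a∘c) = 0; (4) (a∗b − b∗a − a∘b + b∘a)∗c = 0; (5) (a∘b − b∘a)∗c + a∗(c∘b) − (a∗c)∘b − b∗(c∘a) + (b∗c)∘a = 0. -/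
/-- The second Witt multiplication on `W_n^+`: `(a ∗ b)_j = (∑ i, ∂_i (a_i)) * b_j`,
encoding `u∂_i ∗ v∂_j = ∂_i(u)·v·∂_j`. -/
noncomputable def wstar {K : Type*} [CommSemiring K] {n : ℕ}
    (a b : Fin n → MvPolynomial (Fin n) K) : Fin n → MvPolynomial (Fin n) K :=
  fun j => (∑ i, MvPolynomial.pderiv i (a i)) * b j

open MvPolynomial Finset in
lemma pderiv_comm' {K : Type*} [CommSemiring K] {σ : Type*} [DecidableEq σ] (i j : σ)
    (p : MvPolynomial σ K) : pderiv i (pderiv j p) = pderiv j (pderiv i p) := by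
  induction p using MvPolynomial.induction_on with
  | C => simp
  | add p q hp hq => simp [hp, hq]
  | mul_X p k hp =>
    simp only [pderiv_mul, map_add, hp, pderiv_X]
    rcases eq_or_ne k i with rfl | hi <;> rcases eq_or_ne k j with rfl | hj <;>
      simp [Pi.single_apply, *]

open MvPolynomial Finset in
lemma witt_prelie {K : Type*} [CommRing K] {n : ℕ}
    (a b c : Fin n → MvPolynomial (Fin n) K) (i : Fin n) :
    wmul a (wmul b c) i - wmul (wmul a b) c i
      = -∑ j, ∑ k, c k * b j * pderiv k (pderiv j (a i)) := by
  simp only [wmul, map_sum, pderiv_mul, Finset.mul_sum, Finset.sum_mul, mul_add,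
    Finset.sum_add_distrib]
  rw [Finset.sum_comm (γ := Fin n)]
  have h1 : ∑ y : Fin n, ∑ x : Fin n, c y * pderiv y (b x) * pderiv x (a i)
      = ∑ x : Fin n, ∑ i_1 : Fin n, c x * (pderiv x (b i_1) * pderiv i_1 (a i)) :=
    Finset.sum_congr rfl fun _ _ => Finset.sum_congr rfl fun _ _ => by ring
  have h2 : ∑ x : Fin n, ∑ i_1 : Fin n, c x * (b i_1 * pderiv x (pderiv i_1 (a i)))
      = ∑ j : Fin n, ∑ k : Fin n, c k * b j * pderiv k (pderiv j (a i)) := by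
    rw [Finset.sum_comm]
    exact Finset.sum_congr rfl fun _ _ => Finset.sum_congr rfl fun _ _ => by ring
  rw [h1, h2]; ring

open MvPolynomial Finset in
lemma witt_divmul {K : Type*} [CommRing K] {n : ℕ} (a b : Fin n → MvPolynomial (Fin n) K) :
    ∑ i, pderiv i (wmul a b i)
      = (∑ i, ∑ k, pderiv i (b k) * pderiv k (a i))
        + ∑ k, b k * pderiv k (∑ i, pderiv i (a i)) := by
  simp only [wmul, map_sum, pderiv_mul, Finset.sum_add_distrib, Finset.mul_sum]
  congr 1
  rw [Finset.sum_comm]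
  exact Finset.sum_congr rfl fun _ _ => Finset.sum_congr rfl fun _ _ => by
    rw [pderiv_comm']

open MvPolynomial Finset in
lemma witt_divstar {K : Type*} [CommRing K] {n : ℕ} (a b : Fin n → MvPolynomial (Fin n) K) :
    ∑ i, pderiv i (wstar a b i)
      = (∑ k, b k * pderiv k (∑ i, pderiv i (a i)))
        + (∑ i, pderiv i (a i)) * (∑ i, pderiv i (b i)) := by
  simp only [wstar, Finset.sum_mul, map_sum, pderiv_mul, Finset.sum_add_distrib,
    Finset.mul_sum]
  congr 1
  · exact Finset.sum_congr rfl fun _ _ => Finset.sum_congr rfl fun _ _ => by ring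

open MvPolynomial Finset in
lemma witt_Ssym {K : Type*} [CommRing K] {n : ℕ} (a b : Fin n → MvPolynomial (Fin n) K) :
    (∑ i, ∑ k, pderiv i (b k) * pderiv k (a i))
      = ∑ i, ∑ k, pderiv i (a k) * pderiv k (b i) := by
  rw [Finset.sum_comm]
  exact Finset.sum_congr rfl fun _ _ => Finset.sum_congr rfl fun _ _ => by ring

open MvPolynomial Finset in
/-- identities relating the two Witt multiplications `∘` and `∗` on
`W_n^+` over a field of characteristic 0. -/
theorem witt_two_multiplications_identities {K : Type*} [Field K] [CharZero K] {n : ℕ}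
    (hn : 1 ≤ n) (a b c : Fin n → MvPolynomial (Fin n) K) :
    (wmul a (wmul b c) - wmul (wmul a b) c - wmul a (wmul c b) + wmul (wmul a c) b = 0) ∧
    (wstar a (wstar b c) - wstar b (wstar a c) = 0) ∧
    (wmul a (wstar b c) - wstar b (wmul a c) = 0) ∧
    (wstar (wstar a b - wstar b a - wmul a b + wmul b a) c = 0) ∧
    (wstar (wmul a b - wmul b a) c + wstar a (wmul c b) - wmul (wstar a c) b
      - wstar b (wmul c a) + wmul (wstar b c) a = 0) := by
  refine ⟨?_, ?_, ?_, ?_, ?_⟩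
  · -- (1) right-symmetric (pre-Lie) identity
    funext i
    have hb := witt_prelie a b c i
    have hc := witt_prelie a c b i
    have h3 : ∑ j : Fin n, ∑ k : Fin n, c k * b j * pderiv k (pderiv j (a i))
        = ∑ j : Fin n, ∑ k : Fin n, b k * c j * pderiv k (pderiv j (a i)) := by
      rw [Finset.sum_comm]
      exact Finset.sum_congr rfl fun _ _ => Finset.sum_congr rfl fun _ _ => by
        rw [pderiv_comm']; ring
    simp only [Pi.add_apply, Pi.sub_apply, Pi.zero_apply]
    linear_combination hb - hc - h3
  · -- (2)
    funext j
    simp only [wstar, Pi.sub_apply, Pi.zero_apply]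
    ring
  · -- (3)
    funext i
    simp only [wmul, wstar, Pi.sub_apply, Pi.zero_apply, Finset.mul_sum]
    rw [sub_eq_zero]
    exact Finset.sum_congr rfl fun _ _ => by ring
  · -- (4)
    have hz : (∑ i, pderiv i ((wstar a b - wstar b a - wmul a b + wmul b a) i))
        = (0 : MvPolynomial (Fin n) K) := by
      simp only [Pi.sub_apply, Pi.add_apply, map_sub, map_add, Finset.sum_sub_distrib,
        Finset.sum_add_distrib]
      linear_combination witt_divstar a b - witt_divstar b a - witt_divmul a b
        + witt_divmul b a - witt_Ssym a b
    funext j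
    simp only [wstar, Pi.zero_apply]
    rw [hz, zero_mul]
  · -- (5)
    funext j
    have e1 : ∑ i, pderiv i ((wmul a b - wmul b a) i)
        = (∑ k, b k * pderiv k (∑ i, pderiv i (a i)))
          - (∑ k, a k * pderiv k (∑ i, pderiv i (b i))) := by
      simp only [Pi.sub_apply, map_sub, Finset.sum_sub_distrib]
      linear_combination witt_divmul a b - witt_divmul b a + witt_Ssym a b
    have e2 : ∀ p q : Fin n → MvPolynomial (Fin n) K,
        wmul (wstar p c) q j - wstar p (wmul c q) j
          = (∑ k, q k * pderiv k (∑ i, pderiv i (p i))) * c j := by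
      intro p q
      simp only [wstar, wmul]
      simp only [pderiv_mul]
      simp only [mul_add, Finset.sum_add_distrib]
      have h1 : ∑ x, q x * ((∑ i, pderiv i (p i)) * pderiv x (c j))
          = (∑ i, pderiv i (p i)) * ∑ x, q x * pderiv x (c j) := by
        rw [Finset.mul_sum]; exact Finset.sum_congr rfl fun _ _ => by ring
      have h2 : ∑ x, q x * (pderiv x (∑ i, pderiv i (p i)) * c j)
          = (∑ k, q k * pderiv k (∑ i, pderiv i (p i))) * c j := by
        rw [Finset.sum_mul]; exact Finset.sum_congr rfl fun _ _ => by ring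
      linear_combination h1 + h2
    have hj : wstar (wmul a b - wmul b a) c j
        = ((∑ k, b k * pderiv k (∑ i, pderiv i (a i)))
          - (∑ k, a k * pderiv k (∑ i, pderiv i (b i)))) * c j := by
      simp only [wstar]; rw [e1]
    simp only [Pi.add_apply, Pi.sub_apply, Pi.zero_apply]
    linear_combination hj - e2 a b + e2 b a
end

section
/- The rank-one right-symmetric Witt algebra satisfies a right polynomial identity of degree 3: on the polynomial ring K[x] over a field K, with multiplication u∘v = v·u', one has ∑_{σ ∈ Sym(3)} sign(σ) · (a_{σ(1)} ∘ a_{σ(2)}) ∘ a_{σ(3)} = 0 for all a_1, a_2, a_3 ∈ K[x]. -/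
/-- The multiplication of the rank-one right-symmetric Witt algebra on `K[x]`:
`u∘v = v·u'`, encoding `u∂ ∘ v∂ = v·∂(u)·∂`. -/
noncomputable def w1mul {K : Type*} [Field K] (u v : Polynomial K) : Polynomial K :=
  v * Polynomial.derivative u

/-- the rank-one right-symmetric Witt algebra satisfies the right
polynomial identity `∑_{σ ∈ Sym(3)} sign(σ) (a_{σ(1)} ∘ a_{σ(2)}) ∘ a_{σ(3)} = 0`. -/
theorem w1_right_identity_deg3 {K : Type*} [Field K] (a : Fin 3 → Polynomial K) :
    ∑ σ : Equiv.Perm (Fin 3), (Equiv.Perm.sign σ : ℤ) •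
      w1mul (w1mul (a (σ 0)) (a (σ 1))) (a (σ 2)) = 0 := by
  rw [show (Finset.univ : Finset (Equiv.Perm (Fin 3))) =
    {1, Equiv.swap 0 1, Equiv.swap 0 2, Equiv.swap 1 2,
     Equiv.swap 0 1 * Equiv.swap 1 2, Equiv.swap 1 2 * Equiv.swap 0 1} by decide]
  rw [Finset.sum_insert (by decide), Finset.sum_insert (by decide),
    Finset.sum_insert (by decide), Finset.sum_insert (by decide),
    Finset.sum_pair (by decide)]
  have h0 : ∀ σ : Equiv.Perm (Fin 3), ((Equiv.Perm.sign σ : ℤ) •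
      w1mul (w1mul (a (σ 0)) (a (σ 1))) (a (σ 2))) = (Equiv.Perm.sign σ : ℤ) •
      (a (σ 2) * (Polynomial.derivative (a (σ 1)) * Polynomial.derivative (a (σ 0)) +
        a (σ 1) * Polynomial.derivative (Polynomial.derivative (a (σ 0))))) := by
    intro σ; simp [w1mul, mul_comm]
  simp only [h0]
  norm_num [show ((1:Fin 3) = 2) = False by decide, show ((0:Fin 3) = 2) = False by decide, Equiv.Perm.sign_swap, show ((Equiv.swap 0 1 : Equiv.Perm (Fin 3)) 0) = 1 by decide,
    show ((Equiv.swap 0 1 : Equiv.Perm (Fin 3)) 1) = 0 by decide,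
    show ((Equiv.swap 0 1 : Equiv.Perm (Fin 3)) 2) = 2 by decide,
    show ((Equiv.swap 0 2 : Equiv.Perm (Fin 3)) 0) = 2 by decide,
    show ((Equiv.swap 0 2 : Equiv.Perm (Fin 3)) 1) = 1 by decide,
    show ((Equiv.swap 0 2 : Equiv.Perm (Fin 3)) 2) = 0 by decide,
    show ((Equiv.swap 1 2 : Equiv.Perm (Fin 3)) 0) = 0 by decide,
    show ((Equiv.swap 1 2 : Equiv.Perm (Fin 3)) 1) = 2 by decide,
    show ((Equiv.swap 1 2 : Equiv.Perm (Fin 3)) 2) = 1 by decide,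
    show ((Equiv.swap 0 1 * Equiv.swap 1 2 : Equiv.Perm (Fin 3)) 0) = 1 by decide,
    show ((Equiv.swap 0 1 * Equiv.swap 1 2 : Equiv.Perm (Fin 3)) 1) = 2 by decide,
    show ((Equiv.swap 0 1 * Equiv.swap 1 2 : Equiv.Perm (Fin 3)) 2) = 0 by decide,
    show ((Equiv.swap 1 2 * Equiv.swap 0 1 : Equiv.Perm (Fin 3)) 0) = 2 by decide,
    show ((Equiv.swap 1 2 * Equiv.swap 0 1 : Equiv.Perm (Fin 3)) 1) = 0 by decide,
    show ((Equiv.swap 1 2 * Equiv.swap 0 1 : Equiv.Perm (Fin 3)) 2) = 1 by decide]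
  ring
end

section
/- The rank-one right-symmetric Witt algebra satisfies a right-operator standard identity of degree 4: on the polynomial ring K[x] over a field K with multiplication u∘v = v·u', one has ∑_{σ ∈ Sym(4)} sign(σ) · ((((b ∘ a_{σ(1)}) ∘ a_{σ(2)}) ∘ a_{σ(3)}) ∘ a_{σ(4)}) = 0 for all a_1, a_2, a_3, a_4, b ∈ K[x]; equivalently, ∑_{σ∈Sym(4)} sign(σ) r_{a_{σ(1)}}r_{a_{σ(2)}}r_{a_{σ(3)}}r_{a_{σ(4)}} = 0, where r_a denotes the right multiplication operator x ↦ x∘a. -/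
set_option maxHeartbeats 1000000


/-- the rank-one right-symmetric Witt algebra satisfies the right-operator
standard identity of degree 4:
`∑_{σ ∈ Sym(4)} sign(σ) ((((b ∘ a_{σ(1)}) ∘ a_{σ(2)}) ∘ a_{σ(3)}) ∘ a_{σ(4)}) = 0`,
i.e. `∑_σ sign(σ) r_{a_{σ(1)}} r_{a_{σ(2)}} r_{a_{σ(3)}} r_{a_{σ(4)}} = 0`. -/
theorem w1_right_operator_identity_deg4 {K : Type*} [Field K]
    (a : Fin 4 → Polynomial K) (b : Polynomial K) :
    ∑ σ : Equiv.Perm (Fin 4), (Equiv.Perm.sign σ : ℤ) •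
      w1mul (w1mul (w1mul (w1mul b (a (σ 0))) (a (σ 1))) (a (σ 2))) (a (σ 3)) = 0 := by
  rw [← Equiv.sum_comp (((Equiv.refl (Fin 4)).prodCongr (((Equiv.refl (Fin 3)).prodCongr
      (Equiv.Perm.decomposeFin.symm :
        Fin 2 × Equiv.Perm (Fin 1) ≃ Equiv.Perm (Fin 2))).trans
      (Equiv.Perm.decomposeFin.symm :
        Fin 3 × Equiv.Perm (Fin 2) ≃ Equiv.Perm (Fin 3)))).trans
      (Equiv.Perm.decomposeFin.symm :
        Fin 4 × Equiv.Perm (Fin 3) ≃ Equiv.Perm (Fin 4)))]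
  simp only [Fintype.sum_prod_type, Equiv.trans_apply, Equiv.prodCongr_apply, Equiv.coe_refl,
    Prod.map]
  simp only [Fin.sum_univ_succ, Fin.sum_univ_zero, Finset.univ_unique, Finset.sum_singleton]
  simp only [show (1:Fin 4) = Fin.succ 0 from rfl, show (2:Fin 4) = Fin.succ 1 from rfl,
    show (3:Fin 4) = Fin.succ 2 from rfl, show (1:Fin 3) = Fin.succ 0 from rfl,
    show (2:Fin 3) = Fin.succ 1 from rfl, show (1:Fin 2) = Fin.succ 0 from rfl,
    Equiv.Perm.decomposeFin_symm_apply_zero, Equiv.Perm.decomposeFin_symm_apply_succ,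
    Equiv.Perm.decomposeFin.symm_sign, Equiv.Perm.one_apply]
  have hd : (default : Equiv.Perm (Fin 1)) = 1 := Subsingleton.elim _ _
  simp (config := { decide := true }) [-Prod.mk_one_one, hd, Equiv.swap_apply_def, Fin.succ,
    w1mul, Polynomial.derivative_mul]
  generalize a 0 = A0
  generalize a 1 = A1
  generalize a 2 = A2
  generalize a 3 = A3
  generalize Polynomial.derivative A0 = A0'
  generalize Polynomial.derivative A1 = A1'
  generalize Polynomial.derivative A2 = A2'
  generalize Polynomial.derivative A3 = A3'
  generalize Polynomial.derivative A0' = A0''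
  generalize Polynomial.derivative A1' = A1''
  generalize Polynomial.derivative A2' = A2''
  generalize Polynomial.derivative A0'' = A0'''
  generalize Polynomial.derivative A1'' = A1'''
  generalize Polynomial.derivative b = B1
  generalize Polynomial.derivative B1 = B2
  generalize Polynomial.derivative B2 = B3
  generalize Polynomial.derivative B3 = B4
  ring
end

section
/- The Osborn two-parameter deformation of the rank-one Witt algebra is right-symmetric: on the Laurent polynomial ring K[x, x⁻¹] over a field K of characteristic 0, for any scalars ε_1, ε_2 ∈ K, the multiplication u∘v = u'·v + ε_1·x⁻¹·u·v + ε_2·x⁻¹·u'·v (where u' is the formal derivative sending x^k to k·x^{k-1}) satisfies the right-symmetric identity u∘(v∘w) − (u∘v)∘w = u∘(w∘v) − (u∘w)∘v for all u, v, w ∈ K[x, x⁻¹]. -/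
open LaurentPolynomial

/-! Writing `t = x⁻¹`, the Osborn product is `u∘v = (u' + ε₁ t u + ε₂ t u') v`, built from the
derivation `D = (·)'` and the single relation `D t = -t²`. The right-symmetric identity then holds
in any commutative algebra with a derivation and such an element `t`: expanding both sides with the
Leibniz rule and `D t = -t²` leaves a polynomial identity in `t, u, v, w, Du, Dv, Dw, D²u`. -/

def osbornMul {R A : Type*} [CommRing R] [CommRing A] [Algebra R A] (D : Derivation R A A)
    (t : A) (ε₁ ε₂ : R) (u v : A) : A :=
  D u * v + ε₁ • (t * u * v) + ε₂ • (t * D u * v)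

theorem osbornMul_rightSymmetric {R A : Type*} [CommRing R] [CommRing A] [Algebra R A]
    (D : Derivation R A A) (t : A) (ht : D t = -(t * t)) (ε₁ ε₂ : R) (u v w : A) :
    let m := osbornMul D t ε₁ ε₂
    m u (m v w) - m (m u v) w = m u (m w v) - m (m u w) v := by
  simp only [osbornMul, map_add, D.leibniz, ht, smul_eq_mul, Algebra.smul_def]
  ring

namespace LaurentPolynomial

variable {R : Type*} [CommRing R]

theorem map_mul_of_map_T (D : R[T;T⁻¹] →ₗ[R] R[T;T⁻¹]) (hD : ∀ k : ℤ, D (T k) = k • T (k - 1))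
    (p q : R[T;T⁻¹]) : D (p * q) = D p * q + p * D q := by
  induction q using LaurentPolynomial.induction_on' with
  | add q r hq hr => rw [mul_add, map_add, map_add, hq, hr]; ring
  | C_mul_T m b =>
    induction p using LaurentPolynomial.induction_on' with
    | add p r hp hr => rw [add_mul, map_add, map_add, hp, hr]; ring
    | C_mul_T n a =>
      have hprod : C a * T n * (C b * T m) = (a * b) • T (n + m) := by
        rw [smul_eq_C_mul, T_add, map_mul]; ring
      have hleft : (T (n - 1) * T m : R[T;T⁻¹]) = T (n + m - 1) := by
        rw [← T_add, sub_add_eq_add_sub]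
      have hright : (T n * T (m - 1) : R[T;T⁻¹]) = T (n + m - 1) := by
        rw [← T_add, add_sub_assoc]
      rw [hprod, ← smul_eq_C_mul a, ← smul_eq_C_mul b]
      simp only [map_smul, hD, smul_mul_assoc, mul_smul_comm, hleft, hright]
      module

noncomputable def derivationOfMapT (D : R[T;T⁻¹] →ₗ[R] R[T;T⁻¹]) (hD : ∀ k : ℤ, D (T k) = k • T (k - 1)) :
    Derivation R R[T;T⁻¹] R[T;T⁻¹] :=
  Derivation.mk' D fun p q => by
    rw [map_mul_of_map_T D hD, smul_eq_mul, smul_eq_mul]; ring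

theorem map_T_neg_one_of_map_T (D : R[T;T⁻¹] →ₗ[R] R[T;T⁻¹])
    (hD : ∀ k : ℤ, D (T k) = k • T (k - 1)) : D (T (-1)) = -(T (-1) * T (-1)) := by
  rw [hD, ← T_add]
  norm_num

end LaurentPolynomial

theorem osborn_deformation_right_symmetric_general {K : Type*} [Field K]
    (D : LaurentPolynomial K →ₗ[K] LaurentPolynomial K)
    (hD : ∀ k : ℤ, D (T k) = k • T (k - 1))
    (ε₁ ε₂ : K)
    (omul : LaurentPolynomial K → LaurentPolynomial K → LaurentPolynomial K)
    (homul : ∀ u v : LaurentPolynomial K,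
      omul u v = D u * v + ε₁ • (T (-1) * u * v) + ε₂ • (T (-1) * D u * v))
    (u v w : LaurentPolynomial K) :
    omul u (omul v w) - omul (omul u v) w = omul u (omul w v) - omul (omul u w) v := by
  have hosborn : omul = osbornMul (derivationOfMapT D hD) (T (-1)) ε₁ ε₂ := by
    funext u v
    exact homul u v
  rw [hosborn]
  exact osbornMul_rightSymmetric _ _ (map_T_neg_one_of_map_T D hD) ε₁ ε₂ u v w

/-- the Osborn two-parameter deformation of the rank-one Witt algebra is
right-symmetric: on `K[x, x⁻¹]` (char 0), with `D` the formal derivative (the `K`-linear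
map with `D(xᵏ) = k·x^(k-1)`), the multiplication
`u∘v = u'·v + ε₁·x⁻¹·u·v + ε₂·x⁻¹·u'·v` satisfies the right-symmetric identity. -/
theorem osborn_deformation_right_symmetric {K : Type*} [Field K] [CharZero K]
    (D : LaurentPolynomial K →ₗ[K] LaurentPolynomial K)
    (hD : ∀ k : ℤ, D (T k) = k • T (k - 1))
    (ε₁ ε₂ : K)
    (omul : LaurentPolynomial K → LaurentPolynomial K → LaurentPolynomial K)
    (homul : ∀ u v : LaurentPolynomial K,
      omul u v = D u * v + ε₁ • (T (-1) * u * v) + ε₂ • (T (-1) * D u * v))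
    (u v w : LaurentPolynomial K) :
    omul u (omul v w) - omul (omul u v) w = omul u (omul w v) - omul (omul u w) v :=
  osborn_deformation_right_symmetric_general D hD ε₁ ε₂ omul homul u v w
end
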